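/- Define ψ₂(x,y) = ((z₁z₂e^{y-x} + z₁w₂ + w₁w₂e^{x-y})/f(P))·exp(x·f₁(P)/f(P) + y·f₂(P)/f(P)) for a fixed point P with f(P) ≠ 0, with f, f₁, f₂ as in Mironov's example. Then (1/4)(∂_x ψ₂ + ∂_y ψ₂) = (w₁z₂/f(P))·ψ₂. -/

import Mathlib

/-!
The prefactor of ψ₂ is a function of `x - y` alone, so `∂_x + ∂_y` annihilates it, while
`exp (a x + b y)` is an eigenfunction of `∂_x + ∂_y` with eigenvalue `a + b`. Here
`a + b = (f₁ + f₂) / f = 4 w₁ z₂ / f`.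
-/

def mironovF (z₁ w₁ z₂ w₂ : ℂ) : ℂ := z₁ * z₂ + z₁ * w₂ + w₁ * w₂
def mironovF₁ (z₁ w₁ z₂ w₂ : ℂ) : ℂ := z₁ * z₂ + 2 * w₁ * z₂ - w₁ * w₂
def mironovF₂ (z₁ w₁ z₂ w₂ : ℂ) : ℂ := -(z₁ * z₂) + 2 * w₁ * z₂ + w₁ * w₂

open Complex

theorem deriv_add_deriv_of_comp_sub_mul_exp {h : ℂ → ℂ} {x y : ℂ}
    (hh : DifferentiableAt ℂ h (x - y)) (a b : ℂ) :
    deriv (fun s => h (s - y) * exp (s * a + y * b)) x +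
        deriv (fun s => h (x - s) * exp (x * a + s * b)) y =
      (a + b) * (h (x - y) * exp (x * a + y * b)) := by
  have hx : HasDerivAt (fun s => h (s - y) * exp (s * a + y * b))
      (deriv h (x - y) * exp (x * a + y * b) + h (x - y) * (exp (x * a + y * b) * a)) x :=
    (hh.hasDerivAt.comp_sub_const x y).mul
      ((((hasDerivAt_id x).mul_const a).add_const (y * b)).cexp.congr_deriv (by simp))
  have hy : HasDerivAt (fun s => h (x - s) * exp (x * a + s * b))
      (-deriv h (x - y) * exp (x * a + y * b) + h (x - y) * (exp (x * a + y * b) * b)) y :=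
    (hh.hasDerivAt.comp_const_sub x y).mul
      ((((hasDerivAt_id y).mul_const b).const_add (x * a)).cexp.congr_deriv (by simp))
  rw [hx.deriv, hy.deriv]
  ring

theorem mironovF₁_add_mironovF₂ (z₁ w₁ z₂ w₂ : ℂ) :
    mironovF₁ z₁ w₁ z₂ w₂ + mironovF₂ z₁ w₁ z₂ w₂ = 4 * (w₁ * z₂) := by
  simp only [mironovF₁, mironovF₂]
  ring

theorem mironov_psi₂_eigen_general (z₁ w₁ z₂ w₂ : ℂ) :
    ∀ x y : ℂ,
      let ψ₂ : ℂ → ℂ → ℂ := fun x y =>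
        ((z₁ * z₂ * Complex.exp (y - x) + z₁ * w₂ + w₁ * w₂ * Complex.exp (x - y)) /
            mironovF z₁ w₁ z₂ w₂) *
          Complex.exp (x * (mironovF₁ z₁ w₁ z₂ w₂ / mironovF z₁ w₁ z₂ w₂) +
                       y * (mironovF₂ z₁ w₁ z₂ w₂ / mironovF z₁ w₁ z₂ w₂))
      (1 / 4) * (deriv (fun s => ψ₂ s y) x + deriv (fun s => ψ₂ x s) y) =
        (w₁ * z₂ / mironovF z₁ w₁ z₂ w₂) * ψ₂ x y := by
  intro x y ψ₂
  set f := mironovF z₁ w₁ z₂ w₂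
  set h : ℂ → ℂ := fun t => (z₁ * z₂ * exp (-t) + z₁ * w₂ + w₁ * w₂ * exp t) / f
  have hψ₂ : ψ₂ = fun x y =>
      h (x - y) * exp (x * (mironovF₁ z₁ w₁ z₂ w₂ / f) + y * (mironovF₂ z₁ w₁ z₂ w₂ / f)) := by
    simp only [ψ₂, h, f, neg_sub]
  have hh : Differentiable ℂ h := by fun_prop
  rw [hψ₂, deriv_add_deriv_of_comp_sub_mul_exp (hh _), ← add_div, mironovF₁_add_mironovF₂]
  ring

/-- ψ₂ is an eigenfunction of (1/4)(∂_x + ∂_y) with eigenvalue λ₁(P) = w₁z₂/f(P). -/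
theorem mironov_psi₂_eigen (z₁ w₁ z₂ w₂ : ℂ) (hf : mironovF z₁ w₁ z₂ w₂ ≠ 0) :
    ∀ x y : ℂ,
      let ψ₂ : ℂ → ℂ → ℂ := fun x y =>
        ((z₁ * z₂ * Complex.exp (y - x) + z₁ * w₂ + w₁ * w₂ * Complex.exp (x - y)) /
            mironovF z₁ w₁ z₂ w₂) *
          Complex.exp (x * (mironovF₁ z₁ w₁ z₂ w₂ / mironovF z₁ w₁ z₂ w₂) +
                       y * (mironovF₂ z₁ w₁ z₂ w₂ / mironovF z₁ w₁ z₂ w₂))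
      (1 / 4) * (deriv (fun s => ψ₂ s y) x + deriv (fun s => ψ₂ x s) y) =
        (w₁ * z₂ / mironovF z₁ w₁ z₂ w₂) * ψ₂ x y :=
  mironov_psi₂_eigen_general z₁ w₁ z₂ w₂
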